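/- arXiv:1907.10316 — 4 statements merged into one kernel-verified Lean document; each statement's English description precedes it below -/
import Mathlib

section
/- For the Rössler system with parameters a, b, c ∈ ℝ, consider the observability map Φ_x : ℝ³ → ℝ³ obtained by measuring the variable x, namely Φ_x = (x, L_f x, L_f² x). Then for every point (x, y, z) ∈ ℝ³, the observability determinant det DΦ_x(x, y, z) equals x − (a + c); in particular Φ_x has full-rank Jacobian exactly off the plane x = a + c. -/
open ContinuousLinearMap

/-- The `k`-th Lie derivative of a scalar function `h` along a vector field `F`. -/
noncomputable def lieD {E : Type*} [NormedAddCommGroup E] [NormedSpace ℝ E]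
    (F : E → E) (k : ℕ) (h : E → ℝ) : E → ℝ :=
  match k with
  | 0 => h
  | k + 1 => fun p => fderiv ℝ (lieD F k h) p (F p)

/-- The observability determinant of a map `Φ` at a point `p`:
the determinant of the Jacobian (Fréchet derivative) of `Φ` at `p`. -/
noncomputable def obsDet {E : Type*} [NormedAddCommGroup E] [NormedSpace ℝ E]
    (Φ : E → E) (p : E) : ℝ :=
  LinearMap.det ((fderiv ℝ Φ p).toLinearMap)

/-- The Rössler vector field with parameters `a b c`, coordinates `(x, y, z)`. -/
def rossler (a b c : ℝ) (p : Fin 3 → ℝ) : Fin 3 → ℝ :=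
  ![-p 1 - p 2, p 0 + a * p 1, b + p 2 * (p 0 - c)]

/-- Observability map obtained by measuring the variable `x` of the Rössler system:
`Φ_x = (x, L_f x, L_f² x)`. -/
noncomputable def PhiX (a b c : ℝ) (q : Fin 3 → ℝ) : Fin 3 → ℝ :=
  ![lieD (rossler a b c) 0 (fun r => r 0) q,
    lieD (rossler a b c) 1 (fun r => r 0) q,
    lieD (rossler a b c) 2 (fun r => r 0) q]

/-- Coordinate projection as a continuous linear map. -/
abbrev prj (i : Fin 3) : (Fin 3 → ℝ) →L[ℝ] ℝ :=
  ContinuousLinearMap.proj (R := ℝ) (φ := fun _ : Fin 3 => ℝ) i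

lemma fderiv_coord (i : Fin 3) (q : Fin 3 → ℝ) :
    fderiv ℝ (fun r : Fin 3 → ℝ => r i) q = prj i :=
  (prj i).fderiv

lemma lie1 (a b c : ℝ) : lieD (rossler a b c) 1 (fun r => r 0)
    = fun q : Fin 3 → ℝ => -q 1 - q 2 := by
  funext q
  show fderiv ℝ (fun r : Fin 3 → ℝ => r 0) q (rossler a b c q) = _
  rw [fderiv_coord]
  simp [rossler]

lemma lie2 (a b c : ℝ) (q : Fin 3 → ℝ) : lieD (rossler a b c) 2 (fun r => r 0) q
    = -(q 0 + a * q 1) - (b + q 2 * (q 0 - c)) := by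
  show fderiv ℝ (lieD (rossler a b c) 1 (fun r => r 0)) q (rossler a b c q) = _
  rw [lie1]
  have h : HasFDerivAt (fun q : Fin 3 → ℝ => -q 1 - q 2) (-(prj 1) - prj 2) q :=
    ((prj 1).hasFDerivAt.neg).sub (prj 2).hasFDerivAt
  rw [h.fderiv]
  simp [rossler]

/-- The observability determinant of the Rössler system measured via `x` equals
`x - (a + c)`; in particular the Jacobian of `Φ_x` has full rank exactly off the
plane `x = a + c`. -/
theorem rossler_obsDet_x (a b c : ℝ) (p : Fin 3 → ℝ) :
    obsDet (PhiX a b c) p = p 0 - (a + c) ∧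
    (obsDet (PhiX a b c) p ≠ 0 ↔ p 0 ≠ a + c) := by
  have hP : PhiX a b c = fun q => ![q 0, -q 1 - q 2,
      -(q 0 + a * q 1) - (b + q 2 * (q 0 - c))] := by
    funext q
    unfold PhiX
    rw [lie1, lie2]
    rfl
  set L : (Fin 3 → ℝ) →L[ℝ] (Fin 3 → ℝ) := ContinuousLinearMap.pi
    ![prj 0, -(prj 1) - prj 2,
      -(prj 0 + a • prj 1) - (p 2 • prj 0 + (p 0 - c) • prj 2)] with hL
  have hD : HasFDerivAt (PhiX a b c) L p := by
    rw [hP]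
    apply hasFDerivAt_pi''
    intro i
    fin_cases i <;>
      simp only [hL, proj_pi, Matrix.cons_val_zero, Matrix.cons_val_one, Matrix.head_cons,
        Matrix.cons_val_two, Matrix.tail_cons] <;>
      [skip; skip; skip]
    · exact (prj 0).hasFDerivAt
    · exact ((prj 1).hasFDerivAt.neg).sub (prj 2).hasFDerivAt
    · have h1 : HasFDerivAt (fun q : Fin 3 → ℝ => q 0 + a * q 1) (prj 0 + a • prj 1) p :=
        (prj 0).hasFDerivAt.add ((prj 1).hasFDerivAt.const_mul a)
      have h2 := ((prj 2).hasFDerivAt (x := p)).mul (((prj 0).hasFDerivAt (x := p)).sub_const c)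
      have h2' : HasFDerivAt (fun q : Fin 3 → ℝ => q 2 * (q 0 - c))
          (p 2 • prj 0 + (p 0 - c) • prj 2) p := by exact h2
      have := (h1.neg.sub ((hasFDerivAt_const b p).add h2'))
      convert this using 1
      · funext x
        show -(x 0 + a * x 1) - (b + x 2 * (x 0 - c)) = _
        simp only [Pi.neg_apply, Pi.sub_apply, Pi.add_apply]
      · simp
  have hdet : obsDet (PhiX a b c) p = p 0 - (a + c) := by
    rw [obsDet, hD.fderiv]
    rw [← LinearMap.det_toMatrix' (L.toLinearMap)]
    rw [Matrix.det_fin_three]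
    simp [hL, LinearMap.toMatrix'_apply, Pi.single_apply]
    ring
  exact ⟨hdet, by rw [hdet]; exact sub_ne_zero⟩
end

section
/- For the dyad of Rössler systems coupled via the variable y with coupling strength ρ, let Φ : ℝ⁶ → ℝ⁶ be the observability map obtained by measuring y at both nodes, namely Φ = (y₁, L_F y₁, L_F² y₁, y₂, L_F y₂, L_F² y₂). Then the observability determinant det DΦ(p) equals 1 at every point p ∈ ℝ⁶; in particular the dyad is fully observable from measuring y at each node, independently of the value of ρ. -/
/-- Dyad of Rössler systems coupled via the variable `y` with coupling strength `ρ`;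
coordinates `(x₁, y₁, z₁, x₂, y₂, z₂)`. -/
def dyadY (a b c ρ : ℝ) (p : Fin 6 → ℝ) : Fin 6 → ℝ :=
  ![-p 1 - p 2,
    p 0 + a * p 1 + ρ * (p 4 - p 1),
    b + p 2 * (p 0 - c),
    -p 4 - p 5,
    p 3 + a * p 4 + ρ * (p 1 - p 4),
    b + p 5 * (p 3 - c)]

/-- Observability map measuring `y` at both nodes:
`Φ = (y₁, L_F y₁, L_F² y₁, y₂, L_F y₂, L_F² y₂)`. -/
noncomputable def PhiY3Y3 (F : (Fin 6 → ℝ) → (Fin 6 → ℝ)) (q : Fin 6 → ℝ) : Fin 6 → ℝ :=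
  ![lieD F 0 (fun r => r 1) q,
    lieD F 1 (fun r => r 1) q,
    lieD F 2 (fun r => r 1) q,
    lieD F 0 (fun r => r 4) q,
    lieD F 1 (fun r => r 4) q,
    lieD F 2 (fun r => r 4) q]

open scoped BigOperators

@[simp] lemma cons_val_five_gen {α : Type*} {m : ℕ} (x : α)
    (u : Fin (m + 5) → α) :
    Matrix.vecCons x u 5 = Matrix.vecHead
      (Matrix.vecTail (Matrix.vecTail (Matrix.vecTail (Matrix.vecTail u)))) :=
  rfl

@[simp] lemma cons_val_five' {α : Type*} (a₀ a₁ a₂ a₃ a₄ a₅ : α) :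
    ![a₀, a₁, a₂, a₃, a₄, a₅] (5 : Fin 6) = a₅ := rfl

lemma lieD_zero {E : Type*} [NormedAddCommGroup E] [NormedSpace ℝ E]
    (F : E → E) (h : E → ℝ) : lieD F 0 h = h := rfl

lemma sum_mul_eq_clm (w : Fin 6 → ℝ) :
    (fun p : Fin 6 → ℝ => ∑ i, w i * p i)
      = ⇑(∑ i, w i • (ContinuousLinearMap.proj i : (Fin 6 → ℝ) →L[ℝ] ℝ)) := by
  funext p
  simp [ContinuousLinearMap.sum_apply, ContinuousLinearMap.smul_apply,
    ContinuousLinearMap.proj_apply, smul_eq_mul]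

lemma lieD_one_sum (F : (Fin 6 → ℝ) → Fin 6 → ℝ) (w : Fin 6 → ℝ) (q : Fin 6 → ℝ) :
    lieD F 1 (fun p => ∑ i, w i * p i) q = ∑ i, w i * F q i := by
  show fderiv ℝ (fun p : Fin 6 → ℝ => ∑ i, w i * p i) q (F q) = _
  rw [sum_mul_eq_clm, ContinuousLinearMap.fderiv]
  simp [ContinuousLinearMap.sum_apply, ContinuousLinearMap.smul_apply,
    ContinuousLinearMap.proj_apply, smul_eq_mul]

/-- The Jacobian matrix of the observability map for the `y`-coupled dyad. -/
noncomputable def obsMY (a ρ : ℝ) : Matrix (Fin 6) (Fin 6) ℝ :=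
  !![0, 1, 0, 0, 0, 0;
     1, a - ρ, 0, 0, ρ, 0;
     a - ρ, a^2 - 2*a*ρ + 2*ρ^2 - 1, -1, ρ, 2*ρ*(a - ρ), 0;
     0, 0, 0, 0, 1, 0;
     0, ρ, 0, 1, a - ρ, 0;
     ρ, 2*ρ*(a - ρ), 0, a - ρ, a^2 - 2*a*ρ + 2*ρ^2 - 1, -1]

set_option maxRecDepth 10000 in
set_option maxHeartbeats 3200000 in
/-- For the `y`-coupled dyad of Rössler systems, the observability determinant of
`Φ = (y₁, L_F y₁, L_F² y₁, y₂, L_F y₂, L_F² y₂)` equals `1` everywhere: the dyad is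
fully observable from measuring `y` at each node, independently of `ρ`. -/
theorem dyadY_obsDet_y3y3 (a b c ρ : ℝ) (p : Fin 6 → ℝ) :
    obsDet (PhiY3Y3 (dyadY a b c ρ)) p = 1 := by
  set F := dyadY a b c ρ with hF
  have hy1 : (fun r : Fin 6 → ℝ => r 1)
      = fun q : Fin 6 → ℝ => ∑ i, (![0,1,0,0,0,0] : Fin 6 → ℝ) i * q i := by
    funext q; simp [Fin.sum_univ_six]
  have hy4 : (fun r : Fin 6 → ℝ => r 4)
      = fun q : Fin 6 → ℝ => ∑ i, (![0,0,0,0,1,0] : Fin 6 → ℝ) i * q i := by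
    funext q; simp [Fin.sum_univ_six]
  have h1 : lieD F 1 (fun r => r 1)
      = fun q : Fin 6 → ℝ => ∑ i, (![1, a - ρ, 0, 0, ρ, 0] : Fin 6 → ℝ) i * q i := by
    funext q
    rw [hy1, lieD_one_sum]
    simp [hF, dyadY, Fin.sum_univ_six, cons_val_five']
    ring
  have h2 : lieD F 2 (fun r => r 1)
      = fun q : Fin 6 → ℝ => ∑ i, (![a - ρ, a^2 - 2*a*ρ + 2*ρ^2 - 1, -1, ρ, 2*ρ*(a - ρ), 0] : Fin 6 → ℝ) i * q i := by
    funext q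
    show lieD F 1 (lieD F 1 (fun r => r 1)) q = _
    rw [h1, lieD_one_sum]
    simp [hF, dyadY, Fin.sum_univ_six, cons_val_five']
    ring
  have h4 : lieD F 1 (fun r => r 4)
      = fun q : Fin 6 → ℝ => ∑ i, (![0, ρ, 0, 1, a - ρ, 0] : Fin 6 → ℝ) i * q i := by
    funext q
    rw [hy4, lieD_one_sum]
    simp [hF, dyadY, Fin.sum_univ_six, cons_val_five']
    ring
  have h5 : lieD F 2 (fun r => r 4)
      = fun q : Fin 6 → ℝ => ∑ i, (![ρ, 2*ρ*(a - ρ), 0, a - ρ, a^2 - 2*a*ρ + 2*ρ^2 - 1, -1] : Fin 6 → ℝ) i * q i := by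
    funext q
    show lieD F 1 (lieD F 1 (fun r => r 4)) q = _
    rw [h4, lieD_one_sum]
    simp [hF, dyadY, Fin.sum_univ_six, cons_val_five']
    ring
  have hΦ : PhiY3Y3 F = ⇑(LinearMap.toContinuousLinearMap (Matrix.toLin' (obsMY a ρ))) := by
    funext q
    funext i
    fin_cases i <;>
      simp [PhiY3Y3, lieD_zero, h1, h2, h4, h5, obsMY, Matrix.toLin'_apply, Matrix.mulVec,
        dotProduct, Fin.sum_univ_six, cons_val_five']
  rw [obsDet, hΦ, ContinuousLinearMap.fderiv, LinearMap.coe_toContinuousLinearMap,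
    LinearMap.det_toLin']
  simp [obsMY, Matrix.det_succ_row_zero, Fin.sum_univ_succ, Fin.succAbove]
end

section
/- For the dyad of Rössler systems coupled via the variable y with coupling strength ρ, let Φ : ℝ⁶ → ℝ⁶ be the observability map Φ = (y₁, L_F y₁, y₂, L_F y₂, L_F² y₂, L_F³ y₂), obtained by measuring y at both nodes with one derivative at node 1 and three derivatives at node 2. Then the observability determinant det DΦ(p) equals −ρ at every point p ∈ ℝ⁶. -/
/-- Observability map measuring `y` at both nodes, one derivative at node 1 and three
at node 2: `Φ = (y₁, L_F y₁, y₂, L_F y₂, L_F² y₂, L_F³ y₂)`. -/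
noncomputable def PhiY2Y4 (F : (Fin 6 → ℝ) → (Fin 6 → ℝ)) (q : Fin 6 → ℝ) : Fin 6 → ℝ :=
  ![lieD F 0 (fun r => r 1) q,
    lieD F 1 (fun r => r 1) q,
    lieD F 0 (fun r => r 4) q,
    lieD F 1 (fun r => r 4) q,
    lieD F 2 (fun r => r 4) q,
    lieD F 3 (fun r => r 4) q]

abbrev pr (i : Fin 6) : (Fin 6 → ℝ) →L[ℝ] ℝ := ContinuousLinearMap.proj i

@[simp] lemma vec6_0 {α : Type*} (x0 x1 x2 x3 x4 x5 : α) : (![x0,x1,x2,x3,x4,x5]) (0 : Fin 6) = x0 := rfl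
@[simp] lemma vec6_1 {α : Type*} (x0 x1 x2 x3 x4 x5 : α) : (![x0,x1,x2,x3,x4,x5]) (1 : Fin 6) = x1 := rfl
@[simp] lemma vec6_2 {α : Type*} (x0 x1 x2 x3 x4 x5 : α) : (![x0,x1,x2,x3,x4,x5]) (2 : Fin 6) = x2 := rfl
@[simp] lemma vec6_3 {α : Type*} (x0 x1 x2 x3 x4 x5 : α) : (![x0,x1,x2,x3,x4,x5]) (3 : Fin 6) = x3 := rfl
@[simp] lemma vec6_4 {α : Type*} (x0 x1 x2 x3 x4 x5 : α) : (![x0,x1,x2,x3,x4,x5]) (4 : Fin 6) = x4 := rfl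
@[simp] lemma vec6_5 {α : Type*} (x0 x1 x2 x3 x4 x5 : α) : (![x0,x1,x2,x3,x4,x5]) (5 : Fin 6) = x5 := rfl

@[simp] lemma vec6m_0 {α : Type*} (x0 x1 x2 x3 x4 x5 : α) (h : (0:ℕ) < 6) : (![x0,x1,x2,x3,x4,x5]) ⟨0, h⟩ = x0 := rfl
@[simp] lemma vec6m_1 {α : Type*} (x0 x1 x2 x3 x4 x5 : α) (h : (1:ℕ) < 6) : (![x0,x1,x2,x3,x4,x5]) ⟨1, h⟩ = x1 := rfl
@[simp] lemma vec6m_2 {α : Type*} (x0 x1 x2 x3 x4 x5 : α) (h : (2:ℕ) < 6) : (![x0,x1,x2,x3,x4,x5]) ⟨2, h⟩ = x2 := rfl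
@[simp] lemma vec6m_3 {α : Type*} (x0 x1 x2 x3 x4 x5 : α) (h : (3:ℕ) < 6) : (![x0,x1,x2,x3,x4,x5]) ⟨3, h⟩ = x3 := rfl
@[simp] lemma vec6m_4 {α : Type*} (x0 x1 x2 x3 x4 x5 : α) (h : (4:ℕ) < 6) : (![x0,x1,x2,x3,x4,x5]) ⟨4, h⟩ = x4 := rfl
@[simp] lemma vec6m_5 {α : Type*} (x0 x1 x2 x3 x4 x5 : α) (h : (5:ℕ) < 6) : (![x0,x1,x2,x3,x4,x5]) ⟨5, h⟩ = x5 := rfl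

lemma lie1_proj (F : (Fin 6 → ℝ) → Fin 6 → ℝ) (i : Fin 6) :
    lieD F 1 (fun r => r i) = fun q => F q i := by
  funext q
  show fderiv ℝ (fun r => r i) q (F q) = F q i
  rw [show (fun r : Fin 6 → ℝ => r i) = ⇑(pr i) from rfl, ContinuousLinearMap.fderiv]
  rfl

noncomputable def L1 (a ρ : ℝ) : (Fin 6 → ℝ) →L[ℝ] ℝ := pr 0 + a • pr 1 + ρ • (pr 4 - pr 1)
noncomputable def L3 (a ρ : ℝ) : (Fin 6 → ℝ) →L[ℝ] ℝ := pr 3 + a • pr 4 + ρ • (pr 1 - pr 4)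
noncomputable def L4 (a ρ : ℝ) : (Fin 6 → ℝ) →L[ℝ] ℝ :=
  ρ • pr 0 + (2*a*ρ - 2*ρ^2) • pr 1 + (a - ρ) • pr 3
    + (a^2 - 2*a*ρ + 2*ρ^2 - 1) • pr 4 - pr 5

lemma hL1fun (a b c ρ : ℝ) : lieD (dyadY a b c ρ) 1 (fun r => r 1) = ⇑(L1 a ρ) := by
  rw [lie1_proj]; funext q; simp [dyadY, L1]

lemma hL3fun (a b c ρ : ℝ) : lieD (dyadY a b c ρ) 1 (fun r => r 4) = ⇑(L3 a ρ) := by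
  rw [lie1_proj]; funext q; simp [dyadY, L3]

lemma hL4fun (a b c ρ : ℝ) : lieD (dyadY a b c ρ) 2 (fun r => r 4) = ⇑(L4 a ρ) := by
  funext q
  show fderiv ℝ (lieD (dyadY a b c ρ) 1 (fun r => r 4)) q (dyadY a b c ρ q) = _
  rw [hL3fun, ContinuousLinearMap.fderiv]
  simp [dyadY, L3, L4]; ring

lemma hlie3 (a b c ρ : ℝ) : lieD (dyadY a b c ρ) 3 (fun r => r 4)
    = fun q => L4 a ρ (dyadY a b c ρ q) := by
  funext q
  show fderiv ℝ (lieD (dyadY a b c ρ) 2 (fun r => r 4)) q (dyadY a b c ρ q) = _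
  rw [hL4fun, ContinuousLinearMap.fderiv]

/-- explicit form of the observability map -/
noncomputable def PhiExp (a b c ρ : ℝ) (q : Fin 6 → ℝ) : Fin 6 → ℝ :=
  ![q 1, L1 a ρ q, q 4, L3 a ρ q, L4 a ρ q,
    ρ * (-q 1 - q 2) + (2*a*ρ - 2*ρ^2) * (q 0 + a*q 1 + ρ*(q 4 - q 1))
      + (a - ρ) * (-q 4 - q 5)
      + (a^2 - 2*a*ρ + 2*ρ^2 - 1) * (q 3 + a*q 4 + ρ*(q 1 - q 4))
      - (b + q 5 * (q 3 - c))]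

lemma phi_eq (a b c ρ : ℝ) : PhiY2Y4 (dyadY a b c ρ) = PhiExp a b c ρ := by
  funext q
  unfold PhiY2Y4 PhiExp
  rw [hL1fun, hL3fun, hL4fun, hlie3]
  simp only [lieD, Matrix.vecCons, Fin.cons_inj, and_true, true_and,
    eq_self_iff_true]
  simp only [dyadY, L4, ContinuousLinearMap.add_apply, ContinuousLinearMap.sub_apply,
    ContinuousLinearMap.smul_apply, ContinuousLinearMap.coe_sub', ContinuousLinearMap.proj_apply,
    smul_eq_mul, vec6_0, vec6_1, vec6_2, vec6_3, vec6_4, vec6_5]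
  try ring

noncomputable def D5 (a c ρ : ℝ) (p : Fin 6 → ℝ) : (Fin 6 → ℝ) →L[ℝ] ℝ :=
  ρ • (-pr 1 - pr 2) + (2*a*ρ - 2*ρ^2) • (pr 0 + a • pr 1 + ρ • (pr 4 - pr 1))
    + (a - ρ) • (-pr 4 - pr 5)
    + (a^2 - 2*a*ρ + 2*ρ^2 - 1) • (pr 3 + a • pr 4 + ρ • (pr 1 - pr 4))
    - (p 5 • pr 3 + (p 3 - c) • pr 5)

lemma hPhiDeriv (a b c ρ : ℝ) (p : Fin 6 → ℝ) :
    HasFDerivAt (PhiExp a b c ρ)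
      (ContinuousLinearMap.pi ![pr 1, L1 a ρ, pr 4, L3 a ρ, L4 a ρ, D5 a c ρ p]) p := by
  apply hasFDerivAt_pi''
  intro i
  fin_cases i
  · exact (pr 1).hasFDerivAt
  · exact (L1 a ρ).hasFDerivAt
  · exact (pr 4).hasFDerivAt
  · exact (L3 a ρ).hasFDerivAt
  · exact (L4 a ρ).hasFDerivAt
  · exact (((((pr 1).hasFDerivAt.neg.sub (pr 2).hasFDerivAt).const_mul ρ).add
      (((pr 0).hasFDerivAt.add (((pr 1).hasFDerivAt).const_mul a)).add
        ((((pr 4).hasFDerivAt).sub ((pr 1).hasFDerivAt)).const_mul ρ)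
        |>.const_mul (2*a*ρ - 2*ρ^2))
      |>.add (((pr 4).hasFDerivAt.neg.sub (pr 5).hasFDerivAt).const_mul (a - ρ))
      |>.add (((pr 3).hasFDerivAt.add (((pr 4).hasFDerivAt).const_mul a)).add
        ((((pr 1).hasFDerivAt).sub ((pr 4).hasFDerivAt)).const_mul ρ)
        |>.const_mul (a^2 - 2*a*ρ + 2*ρ^2 - 1))).sub
      ((((pr 5).hasFDerivAt).mul (((pr 3).hasFDerivAt).sub_const c)).const_add b))

noncomputable def Jmat (a c ρ : ℝ) (p : Fin 6 → ℝ) : Matrix (Fin 6) (Fin 6) ℝ :=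
  Matrix.of ![![0,1,0,0,0,0],
    ![1, a - ρ, 0, 0, ρ, 0],
    ![0,0,0,0,1,0],
    ![0, ρ, 0, 1, a - ρ, 0],
    ![ρ, 2*a*ρ - 2*ρ^2, 0, a - ρ, a^2 - 2*a*ρ + 2*ρ^2 - 1, -1],
    ![2*a*ρ - 2*ρ^2,
      -ρ + (2*a*ρ - 2*ρ^2) * (a - ρ) + (a^2 - 2*a*ρ + 2*ρ^2 - 1) * ρ,
      -ρ,
      (a^2 - 2*a*ρ + 2*ρ^2 - 1) - p 5,
      (2*a*ρ - 2*ρ^2) * ρ - (a - ρ) + (a^2 - 2*a*ρ + 2*ρ^2 - 1) * (a - ρ),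
      -(a - ρ) - (p 3 - c)]]

set_option maxRecDepth 10000 in
set_option maxHeartbeats 1600000 in
lemma toLin_eq (a c ρ : ℝ) (p : Fin 6 → ℝ) :
    (ContinuousLinearMap.pi ![pr 1, L1 a ρ, pr 4, L3 a ρ, L4 a ρ, D5 a c ρ p]).toLinearMap
      = Matrix.toLin' (Jmat a c ρ p) := by
  apply LinearMap.ext
  intro v
  funext i
  rw [Matrix.toLin'_apply]
  fin_cases i <;>
    simp only [Matrix.mulVec, dotProduct, Fin.sum_univ_six, Jmat, Matrix.of_apply,
      vec6_0, vec6_1, vec6_2, vec6_3, vec6_4, vec6_5,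
      vec6m_0, vec6m_1, vec6m_2, vec6m_3, vec6m_4, vec6m_5,
      ContinuousLinearMap.coe_coe, ContinuousLinearMap.pi_apply,
      L1, L3, L4, D5, ContinuousLinearMap.add_apply, ContinuousLinearMap.sub_apply,
      ContinuousLinearMap.neg_apply, ContinuousLinearMap.smul_apply,
      ContinuousLinearMap.proj_apply, smul_eq_mul] <;> ring

set_option maxRecDepth 10000 in
set_option maxHeartbeats 1600000 in
lemma det_J (a c ρ : ℝ) (p : Fin 6 → ℝ) : (Jmat a c ρ p).det = -ρ := by
  simp [Jmat, Matrix.det_succ_row_zero, Fin.sum_univ_succ]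
  simp +decide [Fin.succAbove]
  try ring

/-- For the `y`-coupled dyad of Rössler systems, the observability determinant of
`Φ = (y₁, L_F y₁, y₂, L_F y₂, L_F² y₂, L_F³ y₂)` equals `-ρ` everywhere. -/
theorem dyadY_obsDet_y2y4 (a b c ρ : ℝ) (p : Fin 6 → ℝ) :
    obsDet (PhiY2Y4 (dyadY a b c ρ)) p = -ρ := by
  rw [obsDet, phi_eq, (hPhiDeriv a b c ρ p).fderiv, toLin_eq, LinearMap.det_toLin', det_J]
end

section
/- For the triad T₂ₐ of Rössler systems coupled via the variable y with coupling strength ρ (directed couplings 3 → 1 and 1 → 2), let Φ : ℝ⁹ → ℝ⁹ be the observability map Φ = (x₂, L_F x₂, y₂, L_F y₂, L_F² y₂, L_F³ y₂, y₁, L_F y₁, L_F² y₁), obtained by measuring at nodes 1 and 2 and attempting to reconstruct the non-adjacent node 3 from node 2. Then the observability determinant det DΦ(p) equals 0 at every point p ∈ ℝ⁹, i.e. node 1 is observed twice and the triad is not observable from this reconstructed vector. -/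
/-- Triad T₂ₐ of Rössler systems coupled via the variable `y` with coupling strength `ρ`,
directed diffusive couplings 3 → 1 and 1 → 2;
coordinates `(x₁, y₁, z₁, x₂, y₂, z₂, x₃, y₃, z₃)`. -/
def triadT2a (a b c ρ : ℝ) (p : Fin 9 → ℝ) : Fin 9 → ℝ :=
  ![-p 1 - p 2,
    p 0 + a * p 1 + ρ * (p 7 - p 1),
    b + p 2 * (p 0 - c),
    -p 4 - p 5,
    p 3 + a * p 4 + ρ * (p 1 - p 4),
    b + p 5 * (p 3 - c),
    -p 7 - p 8,
    p 6 + a * p 7,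
    b + p 8 * (p 6 - c)]

/-- Observability map measuring at nodes 1 and 2:
`Φ = (x₂, L_F x₂, y₂, L_F y₂, L_F² y₂, L_F³ y₂, y₁, L_F y₁, L_F² y₁)`. -/
noncomputable def PhiT17 (F : (Fin 9 → ℝ) → (Fin 9 → ℝ)) (q : Fin 9 → ℝ) : Fin 9 → ℝ :=
  ![lieD F 0 (fun r => r 3) q,
    lieD F 1 (fun r => r 3) q,
    lieD F 0 (fun r => r 4) q,
    lieD F 1 (fun r => r 4) q,
    lieD F 2 (fun r => r 4) q,
    lieD F 3 (fun r => r 4) q,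
    lieD F 0 (fun r => r 1) q,
    lieD F 1 (fun r => r 1) q,
    lieD F 2 (fun r => r 1) q]

/-- For the triad T₂ₐ of `y`-coupled Rössler systems, the observability determinant of
`Φ = (x₂, L_F x₂, y₂, L_F y₂, L_F² y₂, L_F³ y₂, y₁, L_F y₁, L_F² y₁)` equals `0`
everywhere: node 1 is observed twice and the triad is not observable from this
reconstructed vector. -/
theorem triadT2a_obsDet_double_node1_zero (a b c ρ : ℝ) (p : Fin 9 → ℝ) :
    obsDet (PhiT17 (triadT2a a b c ρ)) p = 0 := by
  classical
  set F := triadT2a a b c ρ with hF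
  set Φ := PhiT17 F with hΦ
  -- the linear functional killing Φ pointwise
  let pr : Fin 9 → (Fin 9 → ℝ) →L[ℝ] ℝ :=
    fun i => ContinuousLinearMap.proj (R := ℝ) (φ := fun _ : Fin 9 => ℝ) i
  let ℓ : (Fin 9 → ℝ) →L[ℝ] ℝ := pr 3 - pr 0 - (a - ρ) • pr 2 - ρ • pr 6
  have hfd4 : ∀ q : Fin 9 → ℝ, fderiv ℝ (fun r : Fin 9 → ℝ => r 4) q = pr 4 :=
    fun q => (ContinuousLinearMap.proj (R := ℝ) (φ := fun _ : Fin 9 => ℝ) 4).fderiv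
  have hΦ3 : ∀ q : Fin 9 → ℝ, Φ q 3 = q 3 + a * q 4 + ρ * (q 1 - q 4) := by
    intro q
    show lieD F 1 (fun r => r 4) q = _
    show fderiv ℝ (lieD F 0 (fun r => r 4)) q (F q) = _
    show fderiv ℝ (fun r : Fin 9 → ℝ => r 4) q (F q) = _
    rw [hfd4]
    rfl
  have hker : ∀ q : Fin 9 → ℝ, ℓ (Φ q) = 0 := by
    intro q
    have h0 : Φ q 0 = q 3 := rfl
    have h2 : Φ q 2 = q 4 := rfl
    have h6 : Φ q 6 = q 1 := rfl
    simp only [ℓ, pr, ContinuousLinearMap.sub_apply, ContinuousLinearMap.smul_apply,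
      ContinuousLinearMap.proj_apply, smul_eq_mul]
    rw [hΦ3, h0, h2, h6]
    ring
  have hcomp : ∀ v : Fin 9 → ℝ, ℓ ((fderiv ℝ Φ p) v) = 0 := by
    intro v
    by_cases hdiff : DifferentiableAt ℝ Φ p
    · have h1 : HasFDerivAt (fun q => ℓ (Φ q)) (ℓ.comp (fderiv ℝ Φ p)) p :=
        ℓ.hasFDerivAt.comp p hdiff.hasFDerivAt
      have h2 : HasFDerivAt (fun q => ℓ (Φ q)) (0 : (Fin 9 → ℝ) →L[ℝ] ℝ) p := by
        have : (fun q => ℓ (Φ q)) = fun _ => (0 : ℝ) := funext hker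
        rw [this]; exact hasFDerivAt_const 0 p
      have h3 : ℓ.comp (fderiv ℝ Φ p) = 0 := h1.unique h2
      have := congrFun (congrArg (fun f : (Fin 9 → ℝ) →L[ℝ] ℝ => (f : (Fin 9 → ℝ) → ℝ)) h3) v
      simpa using this
    · rw [fderiv_zero_of_not_differentiableAt hdiff]
      simp
  by_contra hdet
  have hsurj : Function.Surjective (fderiv ℝ Φ p).toLinearMap :=
    (LinearMap.equivOfDetNeZero (fderiv ℝ Φ p).toLinearMap hdet).surjective
  obtain ⟨v, hv⟩ := hsurj (Pi.single 3 1)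
  have h1 : ℓ (Pi.single 3 1) = 0 := by rw [← hv]; exact hcomp v
  have h2 : ℓ (Pi.single 3 1) = 1 := by
    simp [ℓ, pr, Pi.single_apply]
  rw [h2] at h1
  exact one_ne_zero h1
end
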